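/- If B is a minimal k-blocking set in PG(n,q) and there exist p^N − p^{N−1} + 1 points R_i of B (where N = hk, q = p^h) such that every line through R_i is either tangent to B or entirely contained in B, then B is a k-dimensional subspace of PG(n,q). -/

import Mathlib

/-!
Call a point of `B` a vertex if every line joining it to another point of `B` lies in `B`.
Each `R_i` is a vertex, since a line through it meeting `B` again is not tangent; and the
vertices form a subspace. Since `|R| > p^{hk-1} ≥ q^{k-1}`, the points of `R` span a subspace of
projective dimension at least `k - 1`, hence contain a `(k-1)`-space `U` of vertices. `B`
blocks a complementary `(n-k)`-space, so it has a point `Q ∉ U`, and the join of `U` and `Q` is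
a `k`-space contained in `B`. A `k`-space is already a `k`-blocking set, so by minimality `B`
is that `k`-space.
-/

open scoped Classical

noncomputable section

/-- The point set of `PG(n,q)`, `q = p^h`: the projectivization of `F_q^{n+1}`. -/
abbrev PGPoint (p h n : ℕ) [Fact p.Prime] :=
  Projectivization (GaloisField p h) (Fin (n+1) → GaloisField p h)

noncomputable instance (p h n : ℕ) [Fact p.Prime] : Fintype (PGPoint p h n) :=
  @Fintype.ofFinite _ (Quotient.finite _)

/-- A finite set of points of `PG(n,q)` is a `k`-blocking set if it meets every
`(n-k)`-dimensional subspace. -/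
def IsKBlockingSet (p h n k : ℕ) [Fact p.Prime] (B : Finset (PGPoint p h n)) : Prop :=
  ∀ S : Submodule (GaloisField p h) (Fin (n+1) → GaloisField p h),
    Module.finrank (GaloisField p h) S = n - k + 1 → ∃ P ∈ B, P.submodule ≤ S

/-- A minimal `k`-blocking set: no proper subset is a `k`-blocking set. -/
def IsMinimalKBlockingSet (p h n k : ℕ) [Fact p.Prime]
    (B : Finset (PGPoint p h n)) : Prop :=
  IsKBlockingSet p h n k B ∧ ∀ B' ⊂ B, ¬ IsKBlockingSet p h n k B'

open Module Submodule
open scoped LinearAlgebra.Projectivization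

theorem Submodule.exists_le_finrank_eq {K V : Type*} [Field K] [AddCommGroup V] [Module K V]
    (U : Submodule K V) {m : ℕ} (hm : m ≤ finrank K U) : ∃ W ≤ U, finrank K W = m := by
  obtain ⟨f, hf⟩ := exists_linearIndependent_of_le_finrank hm
  refine ⟨span K (Set.range (U.subtype ∘ f)), span_le.2 ?_, ?_⟩
  · rintro _ ⟨i, rfl⟩
    exact (f i).2
  · rw [finrank_span_eq_card (hf.map' U.subtype U.ker_subtype), Fintype.card_fin]

theorem pow_pow_lt_pow_sub_pow_add_one {p h k r : ℕ} (hp : 2 ≤ p) (hh : 0 < h) (hr : r < k) :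
    (p ^ h) ^ r < p ^ (h * k) - p ^ (h * k - 1) + 1 := by
  have hexp : h * r ≤ h * k - 1 := by
    have := Nat.mul_le_mul_left h (Nat.succ_le_of_lt hr)
    rw [Nat.mul_succ] at this
    omega
  have hsucc : p ^ (h * k) = p * p ^ (h * k - 1) := by
    rw [← pow_succ']
    congr 1
    have := Nat.mul_le_mul_left h (Nat.one_le_of_lt hr)
    omega
  have hdouble : 2 * p ^ (h * k - 1) ≤ p ^ (h * k) := hsucc ▸ Nat.mul_le_mul_right _ hp
  calc (p ^ h) ^ r = p ^ (h * r) := (pow_mul p h r).symm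
    _ ≤ p ^ (h * k - 1) := Nat.pow_le_pow_right (by omega) hexp
    _ < p ^ (h * k) - p ^ (h * k - 1) + 1 := by omega

namespace Projectivization

variable {K V : Type*} [Field K] [AddCommGroup V] [Module K V]

theorem submodule_le_iff_rep_mem (P : ℙ K V) (W : Submodule K V) :
    P.submodule ≤ W ↔ P.rep ∈ W := by
  rw [submodule_eq, span_singleton_le_iff_mem]

theorem rep_injective : Function.Injective (Projectivization.rep : ℙ K V → V) :=
  fun _ _ h => Quotient.out_injective (Subtype.val_injective h)

theorem card_le_pow_finrank_span_rep [Finite K] [FiniteDimensional K V] (R : Finset (ℙ K V)) :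
    R.card ≤ Nat.card K ^ finrank K (span K (Projectivization.rep '' (R : Set (ℙ K V)))) := by
  have : Fintype K := Fintype.ofFinite K
  set U := span K (Projectivization.rep '' (R : Set (ℙ K V)))
  have : Finite V := Module.finite_of_finite K
  have : Fintype U := Fintype.ofFinite U
  rw [Nat.card_eq_fintype_card, ← Module.card_eq_pow_finrank, ← Fintype.card_coe R]
  refine Fintype.card_le_of_injective (fun P => ⟨P.1.rep, subset_span ⟨P.1, P.2, rfl⟩⟩) ?_
  rintro ⟨P, _⟩ ⟨Q, _⟩ hPQ
  exact Subtype.ext (rep_injective (congrArg (Subtype.val : U → V) hPQ))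

def affineCone (B : Set (ℙ K V)) : Set V :=
  {x | ∀ hx : x ≠ 0, mk K x hx ∈ B}

variable {B : Set (ℙ K V)}

theorem rep_mem_affineCone_iff {P : ℙ K V} : P.rep ∈ affineCone B ↔ P ∈ B :=
  ⟨fun hP => mk_rep P ▸ hP P.rep_nonzero, fun hP _ => (mk_rep P).symm ▸ hP⟩

theorem smul_mem_affineCone {x : V} (c : K) (hx : x ∈ affineCone B) : c • x ∈ affineCone B := by
  intro hcx
  have hx0 : x ≠ 0 := right_ne_zero_of_smul hcx
  rw [(mk_eq_mk_iff' K _ _ hcx hx0).2 ⟨c, rfl⟩]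
  exact hx hx0

/-- For `v ≠ 0`, membership says that every line joining the point of `v` to a point of `B`
lies in `B`. -/
def vertexSpace (B : Set (ℙ K V)) : Submodule K V where
  carrier := {v | ∀ w ∈ affineCone B, ∀ a b : K, a • v + b • w ∈ affineCone B}
  zero_mem' w hw a b := by simpa using smul_mem_affineCone b hw
  add_mem' {v₁ v₂} h₁ h₂ w hw a b := by
    have hsplit : a • (v₁ + v₂) + b • w = a • v₁ + (1 : K) • (a • v₂ + b • w) := by
      rw [smul_add, one_smul, add_assoc]
    rw [hsplit]
    exact h₁ _ (h₂ w hw a b) a 1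
  smul_mem' c v hv w hw a b := by
    rw [smul_smul]
    exact hv w hw (a * c) b

theorem sup_span_singleton_subset_affineCone {U : Submodule K V} (hU : U ≤ vertexSpace B)
    {y : V} (hy : y ∈ affineCone B) : ((U ⊔ K ∙ y : Submodule K V) : Set V) ⊆ affineCone B := by
  intro x hx
  obtain ⟨u, hu, z, hz, rfl⟩ := mem_sup.1 hx
  obtain ⟨c, rfl⟩ := mem_span_singleton.1 hz
  simpa using hU hu y hy 1 c

theorem rep_mem_vertexSpace [FiniteDimensional K V] {B : Finset (ℙ K V)} {P : ℙ K V}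
    (hP : P ∈ B) (hlines : ∀ L : Submodule K V, finrank K L = 2 → P.submodule ≤ L →
      (B.filter fun Q => Q.submodule ≤ L).card = 1 ∨ ∀ Q : ℙ K V, Q.submodule ≤ L → Q ∈ B) :
    P.rep ∈ vertexSpace (B : Set (ℙ K V)) := by
  intro w hw a b
  by_cases hwP : w ∈ K ∙ P.rep
  · obtain ⟨c, rfl⟩ := mem_span_singleton.1 hwP
    rw [smul_smul, ← add_smul]
    exact smul_mem_affineCone _ (rep_mem_affineCone_iff.2 hP)
  have hw0 : w ≠ 0 := fun h => hwP (h ▸ zero_mem _)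
  have hL : finrank K ↥((K ∙ P.rep) ⊔ (K ∙ w)) = 2 := by
    rw [finrank_sup_span_singleton hwP, finrank_span_singleton P.rep_nonzero]
  set L := (K ∙ P.rep) ⊔ (K ∙ w)
  have hPL : P.submodule ≤ L := by rw [submodule_eq]; exact le_sup_left
  have hwL : (mk K w hw0).submodule ≤ L := by rw [submodule_mk]; exact le_sup_right
  have hPw : P ≠ mk K w hw0 := by
    rintro rfl
    apply hwP
    rw [← submodule_eq, submodule_mk]
    exact mem_span_singleton_self w
  have hsecant : 1 < (B.filter fun Q => Q.submodule ≤ L).card :=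
    Finset.one_lt_card.2 ⟨P, Finset.mem_filter.2 ⟨hP, hPL⟩, _,
      Finset.mem_filter.2 ⟨hw hw0, hwL⟩, hPw⟩
  intro hx
  refine (hlines L hL hPL).resolve_left hsecant.ne' _ ?_
  rw [submodule_mk, span_singleton_le_iff_mem]
  exact add_mem (smul_mem _ _ (mem_sup_left (mem_span_singleton_self _)))
    (smul_mem _ _ (mem_sup_right (mem_span_singleton_self _)))

end Projectivization

open Projectivization

section BlockingSet

variable {p h n k : ℕ} [Fact p.Prime] {B : Finset (PGPoint p h n)}

theorem IsKBlockingSet.exists_rep_notMem (hB : IsKBlockingSet p h n k B) (hkn : k ≤ n)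
    {U : Submodule (GaloisField p h) (Fin (n+1) → GaloisField p h)}
    (hU : finrank (GaloisField p h) U = k) : ∃ Q ∈ B, Q.rep ∉ U := by
  obtain ⟨S, hUS⟩ := U.exists_isCompl
  have hS : finrank (GaloisField p h) S = n - k + 1 := by
    have := finrank_add_eq_of_isCompl hUS
    rw [hU, finrank_fin_fun] at this
    omega
  obtain ⟨Q, hQB, hQS⟩ := hB S hS
  exact ⟨Q, hQB, fun hQU => Q.rep_nonzero <|
    disjoint_def.1 hUS.disjoint _ hQU ((submodule_le_iff_rep_mem Q S).1 hQS)⟩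

theorem isKBlockingSet_filter_submodule_le (hkn : k ≤ n)
    {W : Submodule (GaloisField p h) (Fin (n+1) → GaloisField p h)}
    (hW : finrank (GaloisField p h) W = k + 1)
    (hWB : (W : Set (Fin (n+1) → GaloisField p h)) ⊆ affineCone (B : Set (PGPoint p h n))) :
    IsKBlockingSet p h n k (B.filter fun P => P.submodule ≤ W) := by
  intro S hS
  have hWS : ¬ Disjoint W S := fun hdisj => by
    have := finrank_add_finrank_le_of_disjoint hdisj
    rw [hW, hS, finrank_fin_fun] at this
    omega
  obtain ⟨x, hxW, hxS, hx⟩ : ∃ x ∈ W, x ∈ S ∧ x ≠ 0 := by simpa [disjoint_def] using hWS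
  refine ⟨mk _ x hx, Finset.mem_filter.2 ⟨hWB hxW hx, ?_⟩, ?_⟩ <;>
    rwa [submodule_mk, span_singleton_le_iff_mem]

theorem IsMinimalKBlockingSet.mem_iff_submodule_le (hB : IsMinimalKBlockingSet p h n k B)
    (hkn : k ≤ n) {W : Submodule (GaloisField p h) (Fin (n+1) → GaloisField p h)}
    (hW : finrank (GaloisField p h) W = k + 1)
    (hWB : (W : Set (Fin (n+1) → GaloisField p h)) ⊆ affineCone (B : Set (PGPoint p h n)))
    (P : PGPoint p h n) : P ∈ B ↔ P.submodule ≤ W := by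
  have hfilter : B.filter (fun P => P.submodule ≤ W) = B := by
    by_contra hne
    exact hB.2 _ ((Finset.filter_subset _ B).ssubset_of_ne hne)
      (isKBlockingSet_filter_submodule_le hkn hW hWB)
  refine ⟨fun hP => ?_, fun hPW => ?_⟩
  · rw [← hfilter] at hP
    exact (Finset.mem_filter.1 hP).2
  · rw [submodule_le_iff_rep_mem] at hPW
    exact rep_mem_affineCone_iff.1 (hWB hPW)

end BlockingSet

theorem stmt14_general (p h n k : ℕ) [Fact p.Prime] (hh : 0 < h) (hkn : k ≤ n)
    (B : Finset (PGPoint p h n)) (hmin : IsMinimalKBlockingSet p h n k B)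
    (R : Finset (PGPoint p h n)) (hRB : R ⊆ B)
    (hRcard : p ^ (h * k) - p ^ (h * k - 1) + 1 ≤ R.card)
    (hlines : ∀ P ∈ R, ∀ L : Submodule (GaloisField p h) (Fin (n+1) → GaloisField p h),
      Module.finrank (GaloisField p h) L = 2 → P.submodule ≤ L →
        ((B.filter fun Q => Q.submodule ≤ L).card = 1 ∨
          ∀ Q : PGPoint p h n, Q.submodule ≤ L → Q ∈ B)) :
    ∃ W : Submodule (GaloisField p h) (Fin (n+1) → GaloisField p h),
      Module.finrank (GaloisField p h) W = k + 1 ∧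
      ∀ P : PGPoint p h n, P ∈ B ↔ P.submodule ≤ W := by
  set U := span (GaloisField p h) (Projectivization.rep '' (R : Set (PGPoint p h n)))
  have hUvertex : U ≤ vertexSpace (B : Set (PGPoint p h n)) := span_le.2 <| by
    rintro _ ⟨P, hP, rfl⟩
    exact rep_mem_vertexSpace (hRB hP) (hlines P hP)
  have hkU : k ≤ finrank (GaloisField p h) U := by
    by_contra! hUk
    have hcard := card_le_pow_finrank_span_rep R
    rw [GaloisField.card p h hh.ne'] at hcard
    exact (hRcard.trans hcard).not_gt
      (pow_pow_lt_pow_sub_pow_add_one (Fact.out : p.Prime).two_le hh hUk)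
  obtain ⟨U', hU'U, hU'⟩ := U.exists_le_finrank_eq hkU
  obtain ⟨Q, hQB, hQU'⟩ := hmin.1.exists_rep_notMem hkn hU'
  have hW : finrank (GaloisField p h) ↥(U' ⊔ _ ∙ Q.rep) = k + 1 := by
    rw [finrank_sup_span_singleton hQU', hU']
  exact ⟨_, hW, hmin.mem_iff_submodule_le hkn hW <|
    sup_span_singleton_subset_affineCone (hU'U.trans hUvertex) (rep_mem_affineCone_iff.2 hQB)⟩

/-- if a minimal `k`-blocking set `B` of `PG(n,q)`, `q = p^h`, contains
`p^N - p^{N-1} + 1` points (`N = hk`) such that every line through any of them is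
either tangent to `B` or entirely contained in `B`, then `B` is a `k`-space. -/
theorem stmt14 (p h n k : ℕ) [Fact p.Prime] (hh : 0 < h) (hk1 : 1 ≤ k) (hkn : k ≤ n)
    (B : Finset (PGPoint p h n)) (hmin : IsMinimalKBlockingSet p h n k B)
    (R : Finset (PGPoint p h n)) (hRB : R ⊆ B)
    (hRcard : p ^ (h * k) - p ^ (h * k - 1) + 1 ≤ R.card)
    (hlines : ∀ P ∈ R, ∀ L : Submodule (GaloisField p h) (Fin (n+1) → GaloisField p h),
      Module.finrank (GaloisField p h) L = 2 → P.submodule ≤ L →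
        ((B.filter fun Q => Q.submodule ≤ L).card = 1 ∨
          ∀ Q : PGPoint p h n, Q.submodule ≤ L → Q ∈ B)) :
    ∃ W : Submodule (GaloisField p h) (Fin (n+1) → GaloisField p h),
      Module.finrank (GaloisField p h) W = k + 1 ∧
      ∀ P : PGPoint p h n, P ∈ B ↔ P.submodule ≤ W :=
  stmt14_general p h n k hh hkn B hmin R hRB hRcard hlines

end
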